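/- arXiv:2203.02815 — 2 statements merged into one kernel-verified Lean document; each statement's English description precedes it below -/
import Mathlib

section
/- In every gadget solution of the wire gadget, the bottom optional area (row 0) is covered by the gadget's assigned area if and only if the top optional area (row 2) is not covered. -/
/-- A cell of the integer grid. -/
abbrev Cell : Type := ℤ × ℤ

/-- Two cells are edge-adjacent. -/
def CellAdj (a b : Cell) : Prop :=
  (a.1 - b.1).natAbs + (a.2 - b.2).natAbs = 1

/-- A set of cells is edge-connected (within itself). -/
def ConnectedIn (S : Set Cell) : Prop :=
  ∀ a ∈ S, ∀ b ∈ S,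
    Relation.ReflTransGen (fun x y : Cell => x ∈ S ∧ y ∈ S ∧ CellAdj x y) a b

/-- A map of the grid composed of translations, rotations and reflections
    (an integer isometry given by an orthogonal integer matrix plus a translation). -/
def IsGridIsometry (f : Cell → Cell) : Prop :=
  ∃ a b c d e g : ℤ,
    a * a + b * b = 1 ∧ c * c + d * d = 1 ∧ a * c + b * d = 0 ∧
    ∀ p : Cell, f p = (a * p.1 + b * p.2 + e, c * p.1 + d * p.2 + g)

/-- Two sets of cells are congruent: equal up to translation, rotation and reflection. -/
def CongruentCells (A B : Set Cell) : Prop :=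
  ∃ f : Cell → Cell, IsGridIsometry f ∧ f '' A = B

/-- A (coloring and clue assignment of a) Double Choco board:
    each cell is white (`true`) or gray (`false`), and may carry a clue. -/
structure Board where
  white : Cell → Bool
  clue : Cell → Option ℕ

/-- The white cells of a set. -/
def Board.whitePart (bd : Board) (B : Set Cell) : Set Cell := {p ∈ B | bd.white p = true}

/-- The gray cells of a set. -/
def Board.grayPart (bd : Board) (B : Set Cell) : Set Cell := {p ∈ B | bd.white p = false}

/-- A valid Double Choco block: a finite edge-connected set of cells whose white part and
    gray part are nonempty, edge-connected, and congruent (hence of equal size), and such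
    that any clue `n` carried by a cell of the block forces the white part and the gray
    part to have exactly `n` cells each. -/
def ValidBlock (bd : Board) (B : Set Cell) : Prop :=
  B.Finite ∧ ConnectedIn B ∧
  (bd.whitePart B).Nonempty ∧ (bd.grayPart B).Nonempty ∧
  ConnectedIn (bd.whitePart B) ∧ ConnectedIn (bd.grayPart B) ∧
  CongruentCells (bd.whitePart B) (bd.grayPart B) ∧
  ∀ p ∈ B, ∀ n : ℕ, bd.clue p = some n →
    (bd.whitePart B).ncard = n ∧ (bd.grayPart B).ncard = n

/-- A partition of `area` into pairwise disjoint valid blocks. -/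
def IsBlockPartition (bd : Board) (blocks : Set (Set Cell)) (area : Set Cell) : Prop :=
  (∀ B ∈ blocks, ValidBlock bd B) ∧
  blocks.PairwiseDisjoint id ∧
  ⋃₀ blocks = area

/-- A gadget: a board together with a mandatory area and a collection of optional areas. -/
structure Gadget where
  board : Board
  mandatory : Set Cell
  optionals : Set (Set Cell)

/-- The entire area of a gadget. -/
def Gadget.area (G : Gadget) : Set Cell := G.mandatory ∪ ⋃₀ G.optionals

/-- A gadget solution: a partition into valid blocks of an assigned area containing the
    mandatory area, contained in the gadget, that fully covers or fully avoids each
    optional area. -/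
def IsGadgetSolution (G : Gadget) (area : Set Cell) (blocks : Set (Set Cell)) : Prop :=
  G.mandatory ⊆ area ∧ area ⊆ G.area ∧
  (∀ O ∈ G.optionals, O ⊆ area ∨ Disjoint O area) ∧
  IsBlockPartition G.board blocks area

/-- Row `j` of the (two cells wide) wire: cells `(0, j)` and `(1, j)`. -/
def wireRow (j : ℤ) : Set Cell := {((0 : ℤ), j), ((1 : ℤ), j)}

/-- The board of the wire gadget: column 0 is white, column 1 is gray,
    every cell carries the clue 2. -/
def wireBoard : Board where
  white := fun p => decide (p.1 = 0)
  clue := fun _ => some 2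

/-- The wire gadget: cells `{0,1} × {0,1,2}`; the middle row is mandatory,
    the bottom and top rows are the two optional areas. -/
def wireGadget : Gadget where
  board := wireBoard
  mandatory := wireRow 1
  optionals := {wireRow 0, wireRow 2}

/-!
Every cell of the wire carries the clue 2, so every block has two white and two gray cells, and
an area partitioned into blocks has a multiple of four cells. The assigned area is the middle row
together with the covered optional rows, so it has 2, 4 or 6 cells; only 4 is possible, which
means that exactly one of the two optional rows is covered.
-/

theorem Set.PairwiseDisjoint.dvd_ncard_sUnion {α : Type*} {S : Set (Set α)}
    (hS : S.PairwiseDisjoint id) (hfin : (⋃₀ S).Finite) {m : ℕ} (hm : ∀ s ∈ S, m ∣ s.ncard) :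
    m ∣ (⋃₀ S).ncard := by
  have hSfin : S.Finite := hfin.finite_subsets.subset fun s hs => Set.subset_sUnion_of_mem hs
  rw [Set.sUnion_eq_biUnion,
    hSfin.ncard_biUnion (fun s hs => hfin.subset (Set.subset_sUnion_of_mem hs)) hS,
    finsum_mem_eq_finite_toFinset_sum _ hSfin]
  exact Finset.dvd_sum fun s hs => hm s (hSfin.mem_toFinset.mp hs)

theorem Board.whitePart_union_grayPart (bd : Board) (B : Set Cell) :
    bd.whitePart B ∪ bd.grayPart B = B := by
  ext q
  simp only [Board.whitePart, Board.grayPart, Set.mem_union, Set.mem_ofPred_eq]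
  cases bd.white q <;> simp

theorem Board.disjoint_whitePart_grayPart (bd : Board) (B : Set Cell) :
    Disjoint (bd.whitePart B) (bd.grayPart B) :=
  Set.disjoint_left.mpr fun q hw hg => by simp [Board.grayPart, hw.2] at hg

theorem ValidBlock.ncard_eq_two_mul {bd : Board} {B : Set Cell} (hB : ValidBlock bd B)
    {p : Cell} (hp : p ∈ B) {n : ℕ} (hn : bd.clue p = some n) : B.ncard = 2 * n := by
  obtain ⟨hfin, -, -, -, -, -, -, hclue⟩ := hB
  obtain ⟨hwhite, hgray⟩ := hclue p hp n hn
  rw [← bd.whitePart_union_grayPart B, Set.ncard_union_eq (bd.disjoint_whitePart_grayPart B)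
    (hfin.subset fun q hq => hq.1) (hfin.subset fun q hq => hq.1), hwhite, hgray, two_mul]

theorem IsBlockPartition.two_mul_dvd_ncard {bd : Board} {blocks : Set (Set Cell)}
    {area : Set Cell} (h : IsBlockPartition bd blocks area) (hfin : area.Finite) {n : ℕ}
    (hclue : ∀ p ∈ area, bd.clue p = some n) : 2 * n ∣ area.ncard := by
  obtain ⟨hvalid, hdisj, rfl⟩ := h
  refine hdisj.dvd_ncard_sUnion hfin fun B hB => ?_
  obtain ⟨-, -, ⟨p, hp, -⟩, -⟩ := hvalid B hB
  exact ((hvalid B hB).ncard_eq_two_mul hp (hclue p ⟨B, hB, hp⟩)).symm.dvd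

theorem wireRow_nonempty (j : ℤ) : (wireRow j).Nonempty :=
  ⟨_, Set.mem_insert _ _⟩

theorem wireRow_finite (j : ℤ) : (wireRow j).Finite :=
  (Set.finite_singleton _).insert _

theorem wireRow_ncard (j : ℤ) : (wireRow j).ncard = 2 :=
  Set.ncard_pair (by simp)

theorem disjoint_wireRow {i j : ℤ} (hij : i ≠ j) : Disjoint (wireRow i) (wireRow j) := by
  simp [wireRow, hij.symm]

theorem wireGadget_area : wireGadget.area = wireRow 1 ∪ (wireRow 0 ∪ wireRow 2) := by
  simp [Gadget.area, wireGadget]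

theorem wireGadget_area_ncard : wireGadget.area.ncard = 6 := by
  have hdisj : Disjoint (wireRow 0) (wireRow 2) := disjoint_wireRow (by decide)
  have hdisj' : Disjoint (wireRow 1) (wireRow 0 ∪ wireRow 2) :=
    Set.disjoint_union_right.mpr ⟨disjoint_wireRow (by decide), disjoint_wireRow (by decide)⟩
  rw [wireGadget_area, Set.ncard_union_eq hdisj' (wireRow_finite 1)
    ((wireRow_finite 0).union (wireRow_finite 2)),
    Set.ncard_union_eq hdisj (wireRow_finite 0) (wireRow_finite 2), wireRow_ncard, wireRow_ncard,
    wireRow_ncard]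

/-- In every gadget solution of the wire gadget, the bottom optional area (row 0) is
    covered by the gadget's assigned area if and only if the top optional area (row 2)
    is not covered. -/
theorem wire_bottom_covered_iff_top_uncovered
    (area : Set Cell) (blocks : Set (Set Cell))
    (h : IsGadgetSolution wireGadget area blocks) :
    wireRow 0 ⊆ area ↔ ¬ wireRow 2 ⊆ area := by
  obtain ⟨hmandatory, hsub, hoptional, hpart⟩ := h
  have hfin : area.Finite :=
    (Set.finite_of_ncard_ne_zero (by simp [wireGadget_area_ncard])).subset hsub
  have hdvd : 4 ∣ area.ncard := hpart.two_mul_dvd_ncard hfin (n := 2) fun _ _ => rfl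
  rcases hoptional (wireRow 0) (by simp [wireGadget]) with h0 | h0 <;>
    rcases hoptional (wireRow 2) (by simp [wireGadget]) with h2 | h2
  · have hall : area = wireGadget.area := hsub.antisymm <| by
      rw [wireGadget_area]; exact Set.union_subset hmandatory (Set.union_subset h0 h2)
    rw [hall, wireGadget_area_ncard] at hdvd
    norm_num at hdvd
  · exact iff_of_true h0 fun h2' => (wireRow_nonempty 2).ne_empty (h2.eq_bot_of_le h2')
  · exact iff_of_false (fun h0' => (wireRow_nonempty 0).ne_empty (h0.eq_bot_of_le h0'))
      (not_not_intro h2)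
  · have hmiddle : area = wireRow 1 := by
      refine (Disjoint.subset_left_of_subset_union (wireGadget_area ▸ hsub) ?_).antisymm hmandatory
      exact (Set.disjoint_union_left.mpr ⟨h0, h2⟩).symm
    rw [hmiddle, wireRow_ncard] at hdvd
    norm_num at hdvd
end

section
/- The wire boundary gadget admits a gadget solution that covers its optional area and also admits a gadget solution that does not cover its optional area; hence the wire boundary gadget does not enforce the value of the wire it starts or terminates. -/
/-- The board of the wire boundary gadget: column 0 is white, column 1 is gray,
    the cells of rows 0 and 1 carry the clue 2 while the cells of row 2 carry no clue. -/
def wbBoard : Board where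
  white := fun p => decide (p.1 = 0)
  clue := fun p => if p.2 = 2 then none else some 2

/-- The wire boundary gadget: cells `{0,1} × {0,1,2}`; rows 0 and 1 form the mandatory
    area and row 2 is the single optional area. -/
def wbGadget : Gadget where
  board := wbBoard
  mandatory := wireRow 0 ∪ wireRow 1
  optionals := {wireRow 2}


/-! Rows 0 and 1 form a valid block on their own: a white and a gray vertical domino, translates
of each other, of size 2 as the clues demand. Row 2 is a clue-free white–gray domino, disjoint
from it. So the block of rows 0–1 alone is a solution avoiding the optional row, and together
with the domino of row 2 it is a solution covering it. -/

lemma CellAdj.symm {x y : Cell} (h : CellAdj x y) : CellAdj y x := by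
  unfold CellAdj at *; omega

lemma cellAdj_add_right {x y : Cell} (v : Cell) (h : CellAdj x y) : CellAdj (x + v) (y + v) := by
  simpa [CellAdj] using h

lemma connectedIn_singleton (x : Cell) : ConnectedIn {x} := by
  rintro a rfl b rfl
  exact .refl

lemma reflTransGen_adjWithin_mono {S T : Set Cell} (hST : S ⊆ T) {x y : Cell}
    (h : Relation.ReflTransGen (fun x y : Cell => x ∈ S ∧ y ∈ S ∧ CellAdj x y) x y) :
    Relation.ReflTransGen (fun x y : Cell => x ∈ T ∧ y ∈ T ∧ CellAdj x y) x y :=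
  Relation.ReflTransGen.mono (fun _ _ hxy => ⟨hST hxy.1, hST hxy.2.1, hxy.2.2⟩) _ _ h

/-- Every cell of `A ∪ B` is linked to `a` in both directions, through the edge `a b`. -/
lemma ConnectedIn.union {A B : Set Cell} (hA : ConnectedIn A) (hB : ConnectedIn B)
    {a b : Cell} (ha : a ∈ A) (hb : b ∈ B) (hab : CellAdj a b) : ConnectedIn (A ∪ B) := by
  have to_a : ∀ x ∈ A ∪ B,
      Relation.ReflTransGen (fun u w : Cell => u ∈ A ∪ B ∧ w ∈ A ∪ B ∧ CellAdj u w) x a := by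
    rintro x (hx | hx)
    · exact reflTransGen_adjWithin_mono Set.subset_union_left (hA x hx a ha)
    · exact (reflTransGen_adjWithin_mono Set.subset_union_right (hB x hx b hb)).tail
        ⟨.inr hb, .inl ha, hab.symm⟩
  have from_a : ∀ y ∈ A ∪ B,
      Relation.ReflTransGen (fun u w : Cell => u ∈ A ∪ B ∧ w ∈ A ∪ B ∧ CellAdj u w) a y := by
    rintro y (hy | hy)
    · exact reflTransGen_adjWithin_mono Set.subset_union_left (hA a ha y hy)
    · exact (reflTransGen_adjWithin_mono Set.subset_union_right (hB b hb y hy)).head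
        ⟨.inl ha, .inr hb, hab⟩
  exact fun x hx y hy => (to_a x hx).trans (from_a y hy)

lemma connectedIn_pair {x y : Cell} (h : CellAdj x y) : ConnectedIn {x, y} := by
  rw [Set.insert_eq]
  exact (connectedIn_singleton x).union (connectedIn_singleton y) rfl rfl h

lemma ConnectedIn.image_add_right {S : Set Cell} (hS : ConnectedIn S) (v : Cell) :
    ConnectedIn ((· + v) '' S) := by
  rintro _ ⟨a, ha, rfl⟩ _ ⟨b, hb, rfl⟩
  exact (hS a ha b hb).lift (· + v) fun x y ⟨hx, hy, hxy⟩ =>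
    ⟨⟨x, hx, rfl⟩, ⟨y, hy, rfl⟩, cellAdj_add_right v hxy⟩

lemma congruentCells_image_add_right (S : Set Cell) (v : Cell) :
    CongruentCells S ((· + v) '' S) :=
  ⟨(· + v), ⟨1, 0, 0, 1, v.1, v.2, by ring, by ring, by ring, fun _ => by simp [Prod.ext_iff]⟩,
    rfl⟩

lemma validBlock_of_grayPart_eq_image_add {bd : Board} {B : Set Cell} (v : Cell)
    (hfin : B.Finite) (hB : ConnectedIn B) (hne : (bd.whitePart B).Nonempty)
    (hconn : ConnectedIn (bd.whitePart B)) (hgray : bd.grayPart B = (· + v) '' bd.whitePart B)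
    (hclue : ∀ p ∈ B, ∀ n : ℕ, bd.clue p = some n → (bd.whitePart B).ncard = n) :
    ValidBlock bd B := by
  have hcard : (bd.grayPart B).ncard = (bd.whitePart B).ncard := by
    rw [hgray]
    exact Set.ncard_image_of_injective _ (add_left_injective v)
  refine ⟨hfin, hB, hne, hgray ▸ hne.image _, hconn, hgray ▸ hconn.image_add_right v,
    hgray ▸ congruentCells_image_add_right _ v, fun p hp n hn => ?_⟩
  exact ⟨hclue p hp n hn, hcard.trans (hclue p hp n hn)⟩

lemma Board.whitePart_union (bd : Board) (A B : Set Cell) :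
    bd.whitePart (A ∪ B) = bd.whitePart A ∪ bd.whitePart B :=
  Set.sep_union

lemma Board.grayPart_union (bd : Board) (A B : Set Cell) :
    bd.grayPart (A ∪ B) = bd.grayPart A ∪ bd.grayPart B :=
  Set.sep_union

lemma wbBoard_whitePart_wireRow (j : ℤ) : wbBoard.whitePart (wireRow j) = {(0, j)} := by
  ext ⟨x, y⟩
  simp [Board.whitePart, wireRow, wbBoard]
  omega

lemma wbBoard_grayPart_wireRow (j : ℤ) :
    wbBoard.grayPart (wireRow j) = (· + (1, 0)) '' wbBoard.whitePart (wireRow j) := by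
  rw [wbBoard_whitePart_wireRow]
  ext ⟨x, y⟩
  simp [Board.grayPart, wireRow, wbBoard]
  omega

lemma cellAdj_wireRow (j : ℤ) : CellAdj (0, j) (1, j) := by
  simp [CellAdj]

lemma cellAdj_add_one_snd (i j : ℤ) : CellAdj (i, j) (i, j + 1) := by
  simp [CellAdj]

lemma connectedIn_wireRow (j : ℤ) : ConnectedIn (wireRow j) :=
  connectedIn_pair (cellAdj_wireRow j)

lemma wireRow_disjoint {i j : ℤ} (h : i ≠ j) : Disjoint (wireRow i) (wireRow j) := by
  simp [wireRow, h.symm]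

-- Every clue of `wbBoard` is `2` or absent, so no pair of rows needs to be excluded.
lemma validBlock_wireRow_union_succ (j : ℤ) :
    ValidBlock wbBoard (wireRow j ∪ wireRow (j + 1)) := by
  have hwhite : wbBoard.whitePart (wireRow j ∪ wireRow (j + 1)) = {(0, j)} ∪ {(0, j + 1)} := by
    rw [Board.whitePart_union, wbBoard_whitePart_wireRow, wbBoard_whitePart_wireRow]
  refine validBlock_of_grayPart_eq_image_add (1, 0)
    (((Set.finite_singleton _).insert _).union ((Set.finite_singleton _).insert _))
    ((connectedIn_wireRow j).union (connectedIn_wireRow (j + 1)) (.inl rfl) (.inl rfl)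
      (cellAdj_add_one_snd 0 j)) (hwhite ▸ ⟨_, .inl rfl⟩) ?_ ?_ ?_
  · rw [hwhite]
    exact (connectedIn_singleton _).union (connectedIn_singleton _) rfl rfl
      (cellAdj_add_one_snd 0 j)
  · rw [Board.grayPart_union, Board.whitePart_union, Set.image_union,
      wbBoard_grayPart_wireRow, wbBoard_grayPart_wireRow]
  · intro p _ n hn
    have hn2 : n = 2 := by
      simp only [wbBoard] at hn
      split_ifs at hn
      exact (Option.some.inj hn).symm
    rw [hwhite, hn2, Set.singleton_union, Set.ncard_pair (by simp)]

lemma validBlock_wireRow_two : ValidBlock wbBoard (wireRow 2) := by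
  refine validBlock_of_grayPart_eq_image_add (1, 0) ((Set.finite_singleton _).insert _)
    (connectedIn_wireRow 2) (by simp [wbBoard_whitePart_wireRow])
    (wbBoard_whitePart_wireRow 2 ▸ connectedIn_singleton _) (wbBoard_grayPart_wireRow 2) ?_
  rintro p (rfl | rfl) n hn <;> simp [wbBoard] at hn

lemma isGadgetSolution_mandatory {G : Gadget} (hM : ValidBlock G.board G.mandatory)
    (hdisj : ∀ O ∈ G.optionals, Disjoint O G.mandatory) :
    IsGadgetSolution G G.mandatory {G.mandatory} :=
  ⟨subset_rfl, Set.subset_union_left, fun O hO => .inr (hdisj O hO),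
    ⟨fun _ hB => hB ▸ hM, Set.pairwiseDisjoint_singleton _ _, Set.sUnion_singleton _⟩⟩

lemma isGadgetSolution_mandatory_union_optional {G : Gadget} {O : Set Cell}
    (hO : G.optionals = {O}) (hM : ValidBlock G.board G.mandatory) (hOv : ValidBlock G.board O)
    (hdisj : Disjoint G.mandatory O) :
    IsGadgetSolution G (G.mandatory ∪ O) {G.mandatory, O} := by
  refine ⟨Set.subset_union_left, by simp [Gadget.area, hO], fun O' hO' => ?_, ?_, ?_, ?_⟩
  · rw [hO, Set.mem_singleton_iff] at hO'
    exact .inl (hO' ▸ Set.subset_union_right)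
  · rintro B (rfl | rfl)
    exacts [hM, hOv]
  · exact Set.pairwise_pair.2 fun _ => ⟨hdisj, hdisj.symm⟩
  · exact Set.sUnion_pair _ _

lemma wbGadget_mandatory_disjoint_wireRow_two : Disjoint wbGadget.mandatory (wireRow 2) :=
  (wireRow_disjoint (show (0 : ℤ) ≠ 2 by decide)).union_left
    (wireRow_disjoint (show (1 : ℤ) ≠ 2 by decide))

/-- The wire boundary gadget admits a gadget solution covering its optional area and also
    one not covering its optional area; hence it does not enforce the wire's value. -/
theorem wire_boundary_not_enforcing :
    (∃ (area : Set Cell) (blocks : Set (Set Cell)),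
        IsGadgetSolution wbGadget area blocks ∧ wireRow 2 ⊆ area) ∧
    (∃ (area : Set Cell) (blocks : Set (Set Cell)),
        IsGadgetSolution wbGadget area blocks ∧ Disjoint (wireRow 2) area) := by
  have hM : ValidBlock wbGadget.board wbGadget.mandatory := validBlock_wireRow_union_succ 0
  refine ⟨⟨_, _, isGadgetSolution_mandatory_union_optional rfl hM validBlock_wireRow_two
      wbGadget_mandatory_disjoint_wireRow_two, Set.subset_union_right⟩,
    ⟨_, _, isGadgetSolution_mandatory hM ?_, wbGadget_mandatory_disjoint_wireRow_two.symm⟩⟩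
  rintro O rfl
  exact wbGadget_mandatory_disjoint_wireRow_two.symm
end
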